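/- arXiv:2502.12812 — 3 statements merged into one kernel-verified Lean document; each statement's English description precedes it below -/
import Mathlib

section
/- Let f be as in the context, and suppose additionally that ‖(Df(x))^{-1}‖ ≤ S for every x ∈ R_0 ∪ ⋯ ∪ R_m, for some constant S ≥ 1. Then for every j ≥ 1 and every j-cylinder C = C(α_1,…,α_j), the map f^j restricted to C is injective and Leb({x ∈ C : f^j(x) ∈ H_f}) ≤ S^{jd} · Leb(H_f). Consequently, Leb({x ∈ B_j(c_0μ_f) : f^j(x) ∈ H_f}) ≤ (m+1)^j S^{jd} · Leb(H_f), since B_j(c_0μ_f) is a union of at most (m+1)^j j-cylinders. -/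
open MeasureTheory Filter Set ENNReal NNReal

noncomputable section

/-- Euclidean space `ℝ^d`. -/
abbrev Euc (d : ℕ) := EuclideanSpace ℝ (Fin d)

variable {d m : ℕ}

/-- The `n`-cylinder `C(α₁,…,αₙ) = R_{α₁} ∩ f⁻¹(R_{α₂}) ∩ ⋯ ∩ f^{-(n-1)}(R_{αₙ})`. -/
def cylinder (f : Euc d → Euc d) (R : Fin (m + 1) → Set (Euc d)) {n : ℕ}
    (α : Fin n → Fin (m + 1)) : Set (Euc d) :=
  ⋂ j : Fin n, f^[(j : ℕ)] ⁻¹' R (α j)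

/-- The average least expansion
`φ_n(α₁,…,αₙ) = (1/n) ∑_{j=1}^n inf_{x ∈ C_j} log ‖(Df(f^{j-1}(x)))⁻¹‖⁻¹`,
where the derivative of `f` at `x` is the continuous linear equivalence `Df x`. -/
def avgExp (f : Euc d → Euc d) (Df : Euc d → (Euc d ≃L[ℝ] Euc d))
    (R : Fin (m + 1) → Set (Euc d)) {n : ℕ} (α : Fin n → Fin (m + 1)) : ℝ :=
  (n : ℝ)⁻¹ * ∑ j : Fin n,
    sInf ((fun x => Real.log ‖((Df (f^[(j : ℕ)] x)).symm : Euc d →L[ℝ] Euc d)‖⁻¹) ''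
      cylinder f R (fun i : Fin ((j : ℕ) + 1) => α (Fin.castLE j.isLt i)))

/-- `B_n(c)`: the union of all `n`-cylinders `C(α₁,…,αₙ)` such that
`φ_j(α₁,…,α_j) ≤ c` for every `j ∈ {1,…,n}` (the *bad* `n`-cylinders). -/
def badSet (f : Euc d → Euc d) (Df : Euc d → (Euc d ≃L[ℝ] Euc d))
    (R : Fin (m + 1) → Set (Euc d)) (n : ℕ) (c : ℝ) : Set (Euc d) :=
  ⋃ α : Fin n → Fin (m + 1),
    ⋃ (_ : ∀ j : Fin n,
      avgExp f Df R (fun i : Fin ((j : ℕ) + 1) => α (Fin.castLE j.isLt i)) ≤ c),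
    cylinder f R α

/-- The hole `H_f = ⋃ i, H_i` where `H_i = W_i \ (R₀ ∪ ⋯ ∪ R_m)` and `W_i = f(R_i)`. -/
def holeSet (f : Euc d → Euc d) (R : Fin (m + 1) → Set (Euc d)) : Set (Euc d) :=
  ⋃ i, (f '' R i) \ ⋃ j, R j

/-- The repeller `Λ_f`: points whose forward orbit never falls into the hole. -/
def repeller (f : Euc d → Euc d) (R : Fin (m + 1) → Set (Euc d)) : Set (Euc d) :=
  {x | ∀ n : ℕ, f^[n] x ∈ ⋃ i, R i}

/-- The minimal number of `ε`-balls needed to cover `s`. -/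
def coverNum (s : Set (Euc d)) (ε : ℝ) : ℕ :=
  sInf {n : ℕ | ∃ t : Finset (Euc d), t.card = n ∧ s ⊆ ⋃ x ∈ t, Metric.ball x ε}

/-- Upper box dimension (limit capacity):
`BD(s) = limsup_{ε→0⁺} log n(s,ε) / |log ε|`. -/
def upperBoxDim (s : Set (Euc d)) : ℝ :=
  limsup (fun ε : ℝ => Real.log (coverNum s ε) / |Real.log ε|)
    (nhdsWithin 0 (Set.Ioi 0))

end

open MeasureTheory Filter Set ENNReal NNReal


noncomputable section
variable {d m : ℕ}

lemma aux_det_mul (e : Euc d ≃L[ℝ] Euc d) :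
    ((e : Euc d →L[ℝ] Euc d).det) * ((e.symm : Euc d →L[ℝ] Euc d).det) = 1 := by
  rw [ContinuousLinearMap.det, ContinuousLinearMap.det, ← LinearMap.det_comp]
  have h : ((e : Euc d →L[ℝ] Euc d) : Euc d →ₗ[ℝ] Euc d) ∘ₗ
      ((e.symm : Euc d →L[ℝ] Euc d) : Euc d →ₗ[ℝ] Euc d) = LinearMap.id := by
    ext x; simp
  rw [h, LinearMap.det_id]

lemma aux_abs_det_le (hd : 1 ≤ d) (L : Euc d →L[ℝ] Euc d) (S : ℝ) (hL : ‖L‖ ≤ S) :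
    |L.det| ≤ S ^ d := by
  have hfr : Module.finrank ℝ (Euc d) = d := finrank_euclideanSpace_fin
  have : Nontrivial (Euc d) :=
    Module.nontrivial_of_finrank_pos (R := ℝ) (by omega : 0 < Module.finrank ℝ (Euc d))
  have hS0 : 0 ≤ S := le_trans (norm_nonneg L) hL
  have himg : L '' Metric.ball 0 1 ⊆ Metric.closedBall 0 S := by
    rintro _ ⟨x, hx, rfl⟩
    simp only [Metric.mem_ball, dist_zero_right] at hx
    simp only [Metric.mem_closedBall, dist_zero_right]
    calc ‖L x‖ ≤ ‖L‖ * ‖x‖ := L.le_opNorm x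
    _ ≤ S * 1 := mul_le_mul hL hx.le (norm_nonneg x) hS0
    _ = S := mul_one S
  have h1 : volume (L '' Metric.ball 0 1)
      = ENNReal.ofReal |L.det| * volume (Metric.ball (0:Euc d) 1) := by
    rw [Measure.addHaar_image_continuousLinearMap]
  have h2 : volume (Metric.closedBall (0:Euc d) S)
      = ENNReal.ofReal (S ^ d) * volume (Metric.ball (0:Euc d) 1) := by
    rw [Measure.addHaar_closedBall _ _ hS0, hfr]
  have h3 : ENNReal.ofReal |L.det| * volume (Metric.ball (0:Euc d) 1)
      ≤ ENNReal.ofReal (S ^ d) * volume (Metric.ball (0:Euc d) 1) := by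
    rw [← h1, ← h2]; exact measure_mono himg
  rw [ENNReal.mul_le_mul_iff_left (Metric.measure_ball_pos volume 0 one_pos).ne'
    measure_ball_lt_top.ne] at h3
  rwa [ENNReal.ofReal_le_ofReal_iff (by positivity)] at h3

lemma aux_meas_inter {f : Euc d → Euc d} {K B : Set (Euc d)} (hK : IsCompact K)
    (hf : ContinuousOn f K) (hB : MeasurableSet B) : MeasurableSet (K ∩ f ⁻¹' B) := by
  have hKm : MeasurableSet K := hK.measurableSet
  have hres : Continuous (K.restrict f) := continuousOn_iff_continuous_restrict.mp hf
  have h1 : MeasurableSet (K.restrict f ⁻¹' B) := hres.measurable hB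
  have h2 : K ∩ f ⁻¹' B = Subtype.val '' (K.restrict f ⁻¹' B) := by
    ext x
    simp only [mem_inter_iff, mem_preimage, mem_image, Set.restrict_apply]
    constructor
    · rintro ⟨hx, hfx⟩; exact ⟨⟨x, hx⟩, hfx, rfl⟩
    · rintro ⟨⟨y, hy⟩, hfy, rfl⟩; exact ⟨hy, hfy⟩
  rw [h2]
  exact (MeasurableEmbedding.subtype_coe hKm).measurableSet_image.mpr h1

lemma aux_step (hd : 1 ≤ d) (f : Euc d → Euc d) (Df : Euc d → (Euc d ≃L[ℝ] Euc d))
    (K : Set (Euc d)) (hK : IsCompact K)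
    (hderiv : ∀ x ∈ K, HasFDerivAt f (Df x : Euc d →L[ℝ] Euc d) x)
    (hinj : Set.InjOn f K)
    (S : ℝ) (hS : 1 ≤ S)
    (hSbound : ∀ x ∈ K, ‖((Df x).symm : Euc d →L[ℝ] Euc d)‖ ≤ S)
    (A : Set (Euc d)) (hA : A ⊆ K) :
    volume A ≤ ENNReal.ofReal (S ^ d) * volume (f '' A) := by
  have hSd : (0:ℝ) < S ^ d := by positivity
  set B := toMeasurable volume (f '' A) with hB
  set s := K ∩ f ⁻¹' B with hs
  have hcont : ContinuousOn f K := fun x hx => (hderiv x hx).continuousAt.continuousWithinAt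
  have hsm : MeasurableSet s := aux_meas_inter hK hcont (measurableSet_toMeasurable _ _)
  have hAs : A ⊆ s := fun x hx =>
    ⟨hA hx, subset_toMeasurable _ _ ⟨x, hx, rfl⟩⟩
  have hderiv' : ∀ x ∈ s, HasFDerivWithinAt f (Df x : Euc d →L[ℝ] Euc d) s x :=
    fun x hx => (hderiv x hx.1).hasFDerivWithinAt
  have hinj' : Set.InjOn f s := hinj.mono inter_subset_left
  have hint : (∫⁻ x in s, ENNReal.ofReal |(Df x : Euc d →L[ℝ] Euc d).det| ∂volume)
      ≤ volume (f '' s) :=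
    lintegral_abs_det_fderiv_le_addHaar_image volume hsm hderiv' hinj'
  have hpt : ∀ x ∈ s, ENNReal.ofReal ((S ^ d)⁻¹)
      ≤ ENNReal.ofReal |(Df x : Euc d →L[ℝ] Euc d).det| := by
    intro x hx
    have h1 : |((Df x).symm : Euc d →L[ℝ] Euc d).det| ≤ S ^ d :=
      aux_abs_det_le hd _ S (hSbound x hx.1)
    have h2 := aux_det_mul (Df x)
    have h3 : |(Df x : Euc d →L[ℝ] Euc d).det| * |((Df x).symm : Euc d →L[ℝ] Euc d).det| = 1 := by
      rw [← abs_mul, h2, abs_one]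
    have h4 : (0:ℝ) < |((Df x).symm : Euc d →L[ℝ] Euc d).det| := by
      rcases lt_or_eq_of_le (abs_nonneg (((Df x).symm : Euc d →L[ℝ] Euc d).det)) with h | h
      · exact h
      · exfalso; rw [← h, mul_zero] at h3; exact zero_ne_one h3
    have h5 : |(Df x : Euc d →L[ℝ] Euc d).det|
        = |((Df x).symm : Euc d →L[ℝ] Euc d).det|⁻¹ :=
      eq_inv_of_mul_eq_one_left h3
    apply ENNReal.ofReal_le_ofReal
    rw [h5]
    exact inv_anti₀ h4 h1
  have hconst : ENNReal.ofReal ((S ^ d)⁻¹) * volume s ≤ volume (f '' A) := by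
    calc ENNReal.ofReal ((S ^ d)⁻¹) * volume s
        = ∫⁻ _ in s, ENNReal.ofReal ((S ^ d)⁻¹) ∂volume := by
          rw [MeasureTheory.setLIntegral_const]
      _ ≤ ∫⁻ x in s, ENNReal.ofReal |(Df x : Euc d →L[ℝ] Euc d).det| ∂volume := by
          apply lintegral_mono_ae
          filter_upwards [ae_restrict_mem hsm] with x hx using hpt x hx
      _ ≤ volume (f '' s) := hint
      _ ≤ volume B := measure_mono (by rintro _ ⟨x, hx, rfl⟩; exact hx.2)
      _ = volume (f '' A) := measure_toMeasurable _
  have hc : ENNReal.ofReal (S ^ d) * ENNReal.ofReal ((S ^ d)⁻¹) = 1 := by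
    rw [← ENNReal.ofReal_mul hSd.le, mul_inv_cancel₀ hSd.ne', ENNReal.ofReal_one]
  calc volume A ≤ volume s := measure_mono hAs
    _ = ENNReal.ofReal (S ^ d) * (ENNReal.ofReal ((S ^ d)⁻¹) * volume s) := by
        rw [← mul_assoc, hc, one_mul]
    _ ≤ ENNReal.ofReal (S ^ d) * volume (f '' A) := mul_le_mul_right hconst _

lemma aux_injOn_iterate (f : Euc d → Euc d) (R : Fin (m + 1) → Set (Euc d))
    (hinj : ∀ i, Set.InjOn f (R i)) :
    ∀ n (α : Fin n → Fin (m + 1)), Set.InjOn f^[n] (cylinder f R α) := by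
  intro n
  induction n with
  | zero => intro α x _ y _ h; simpa using h
  | succ n ih =>
    intro α x hx y hy h
    have hxn : f^[n] x ∈ R (α (Fin.last n)) := by
      have := mem_iInter.mp hx (Fin.last n); simpa using this
    have hyn : f^[n] y ∈ R (α (Fin.last n)) := by
      have := mem_iInter.mp hy (Fin.last n); simpa using this
    rw [Function.iterate_succ_apply', Function.iterate_succ_apply'] at h
    have hn : f^[n] x = f^[n] y := hinj _ hxn hyn h
    have hx' : x ∈ cylinder f R (fun i : Fin n => α i.castSucc) := by
      apply mem_iInter.mpr
      intro i
      have := mem_iInter.mp hx i.castSucc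
      simpa using this
    have hy' : y ∈ cylinder f R (fun i : Fin n => α i.castSucc) := by
      apply mem_iInter.mpr
      intro i
      have := mem_iInter.mp hy i.castSucc
      simpa using this
    exact ih _ hx' hy' hn

end

set_option maxHeartbeats 1000000 in
/-- If `‖(Df(x))⁻¹‖ ≤ S` on `R₀ ∪ ⋯ ∪ R_m` with `S ≥ 1`, then for every
`j ≥ 1` and every `j`-cylinder `C`, the map `f^j` is injective on `C` and
`Leb({x ∈ C : f^j(x) ∈ H_f}) ≤ S^{jd}·Leb(H_f)`; consequently
`Leb({x ∈ B_j(c₀μ_f) : f^j(x) ∈ H_f}) ≤ (m+1)^j S^{jd}·Leb(H_f)`,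
since `B_j(c₀μ_f)` is a union of at most `(m+1)^j` many `j`-cylinders. -/
theorem volume_preimage_hole_le
    (d m : ℕ) (hd : 1 ≤ d)
    (f : Euc d → Euc d) (Df : Euc d → (Euc d ≃L[ℝ] Euc d))
    (R W : Fin (m + 1) → Set (Euc d))
    -- the `R_i` are compact with pairwise disjoint interiors
    (hcompact : ∀ i, IsCompact (R i))
    (hdisj : Pairwise fun i j => interior (R i) ∩ interior (R j) = ∅)
    -- `f` restricted to each `R i` is a `C¹` diffeomorphism onto `W i ⊇ ⋃ j, R j`
    (hderiv : ∀ i, ∀ x ∈ R i, HasFDerivAt f (Df x : Euc d →L[ℝ] Euc d) x)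
    (hDfcont : ∀ i, ContinuousOn (fun x => (Df x : Euc d →L[ℝ] Euc d)) (R i))
    (hinj : ∀ i, Set.InjOn f (R i))
    (himg : ∀ i, f '' R i = W i)
    (hWsup : ∀ i, (⋃ j, R j) ⊆ W i)
    -- the bound `‖(Df(x))⁻¹‖ ≤ S` with `S ≥ 1`
    (S : ℝ) (hS : 1 ≤ S)
    (hSbound : ∀ x ∈ ⋃ i, R i, ‖((Df x).symm : Euc d →L[ℝ] Euc d)‖ ≤ S)
    (c₀ : ℝ) (hc₀ : 0 < c₀)
    (j : ℕ) (hj : 1 ≤ j) :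
    (∀ α : Fin j → Fin (m + 1),
      Set.InjOn f^[j] (cylinder f R α) ∧
      volume {x ∈ cylinder f R α | f^[j] x ∈ holeSet f R} ≤
        ENNReal.ofReal (S ^ (j * d)) * volume (holeSet f R)) ∧
    volume {x ∈ badSet f Df R j (c₀ * (volume (holeSet f R)).toReal) |
        f^[j] x ∈ holeSet f R} ≤
      ENNReal.ofReal (((m : ℝ) + 1) ^ j * S ^ (j * d)) * volume (holeSet f R) := by
  have key : ∀ α : Fin j → Fin (m + 1),
      Set.InjOn f^[j] (cylinder f R α) ∧
      volume {x ∈ cylinder f R α | f^[j] x ∈ holeSet f R} ≤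
        ENNReal.ofReal (S ^ (j * d)) * volume (holeSet f R) := by
    intro α
    refine ⟨aux_injOn_iterate f R hinj j α, ?_⟩
    set A := {x ∈ cylinder f R α | f^[j] x ∈ holeSet f R} with hAdef
    have claim : ∀ k, k ≤ j →
        volume A ≤ (ENNReal.ofReal (S ^ d)) ^ k * volume (f^[k] '' A) := by
      intro k
      induction k with
      | zero => intro _; simp
      | succ k ih =>
        intro hk1
        have hkj : k < j := hk1
        have hsub : f^[k] '' A ⊆ R (α ⟨k, hkj⟩) := by
          rintro _ ⟨x, hx, rfl⟩
          have := mem_iInter.mp hx.1 ⟨k, hkj⟩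
          simpa using this
        have hstep := aux_step hd f Df (R (α ⟨k, hkj⟩)) (hcompact _) (hderiv _) (hinj _)
          S hS (fun x hx => hSbound x (mem_iUnion.mpr ⟨_, hx⟩)) (f^[k] '' A) hsub
        have himg2 : f '' (f^[k] '' A) = f^[(k+1)] '' A := by
          rw [← Set.image_comp, ← Function.iterate_succ']
        rw [himg2] at hstep
        calc volume A ≤ (ENNReal.ofReal (S ^ d)) ^ k * volume (f^[k] '' A) := ih hkj.le
          _ ≤ (ENNReal.ofReal (S ^ d)) ^ k *
              (ENNReal.ofReal (S ^ d) * volume (f^[(k+1)] '' A)) := mul_le_mul_right hstep _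
          _ = (ENNReal.ofReal (S ^ d)) ^ (k+1) * volume (f^[(k+1)] '' A) := by
              rw [pow_succ, mul_assoc]
    have hfin : f^[j] '' A ⊆ holeSet f R := by rintro _ ⟨x, hx, rfl⟩; exact hx.2
    calc volume A ≤ (ENNReal.ofReal (S ^ d)) ^ j * volume (f^[j] '' A) := claim j le_rfl
      _ ≤ (ENNReal.ofReal (S ^ d)) ^ j * volume (holeSet f R) :=
          mul_le_mul_right (measure_mono hfin) _
      _ = ENNReal.ofReal (S ^ (j * d)) * volume (holeSet f R) := by
          rw [← ENNReal.ofReal_pow (by positivity), ← pow_mul, Nat.mul_comm d j]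
  refine ⟨key, ?_⟩
  set c := c₀ * (volume (holeSet f R)).toReal with hc
  have hsub : {x ∈ badSet f Df R j c | f^[j] x ∈ holeSet f R} ⊆
      ⋃ α : Fin j → Fin (m + 1), {x ∈ cylinder f R α | f^[j] x ∈ holeSet f R} := by
    rintro x ⟨hx, hP⟩
    simp only [badSet, mem_iUnion] at hx
    obtain ⟨α, _, hcyl⟩ := hx
    exact mem_iUnion.mpr ⟨α, hcyl, hP⟩
  have hcard : (Fintype.card (Fin j → Fin (m + 1)) : ℝ≥0∞) *
      (ENNReal.ofReal (S ^ (j * d)) * volume (holeSet f R)) =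
      ENNReal.ofReal (((m : ℝ) + 1) ^ j * S ^ (j * d)) * volume (holeSet f R) := by
    have h1 : Fintype.card (Fin j → Fin (m + 1)) = (m + 1) ^ j := by
      simp [Fintype.card_fun]
    have h2 : ((m : ℝ) + 1) ^ j = (((m + 1) ^ j : ℕ) : ℝ) := by push_cast; ring
    rw [ENNReal.ofReal_mul (by positivity), h2, ENNReal.ofReal_natCast, h1, mul_assoc]
  calc volume {x ∈ badSet f Df R j c | f^[j] x ∈ holeSet f R}
      ≤ volume (⋃ α : Fin j → Fin (m + 1), {x ∈ cylinder f R α | f^[j] x ∈ holeSet f R}) :=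
        measure_mono hsub
    _ ≤ ∑' α : Fin j → Fin (m + 1), volume {x ∈ cylinder f R α | f^[j] x ∈ holeSet f R} :=
        measure_iUnion_le _
    _ ≤ ∑' _ : Fin j → Fin (m + 1),
          ENNReal.ofReal (S ^ (j * d)) * volume (holeSet f R) :=
        ENNReal.tsum_le_tsum (fun α => (key α).2)
    _ = (Fintype.card (Fin j → Fin (m + 1)) : ℝ≥0∞) *
          (ENNReal.ofReal (S ^ (j * d)) * volume (holeSet f R)) := by
        rw [tsum_fintype]
        simp [Finset.sum_const, nsmul_eq_mul]
    _ = ENNReal.ofReal (((m : ℝ) + 1) ^ j * S ^ (j * d)) * volume (holeSet f R) := hcard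
end

section
/- There exists μ_2 > 0 such that for every real μ with 0 < μ < μ_2 and all integers l, t with l ≥ t ≥ 1 and t ≤ μ·l/(−4 log μ), one has log C(l, t−1) ≤ (13/32)·μ·l. -/
private lemma log_fact_ge (k : ℕ) (hk : 1 ≤ k) :
    (k : ℝ) * Real.log k - k ≤ Real.log (Nat.factorial k) := by
  have hkpos : (0:ℝ) < k := by exact_mod_cast hk
  have h := Real.pow_div_factorial_le_exp (x := (k:ℝ)) (le_of_lt hkpos) k
  have hfac : (0:ℝ) < (Nat.factorial k : ℝ) := by
    exact_mod_cast Nat.factorial_pos k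
  have h2 : (k:ℝ)^k ≤ (Nat.factorial k : ℝ) * Real.exp k := by
    rw [div_le_iff₀ hfac] at h; linarith
  have h3 := Real.log_le_log (by positivity) h2
  rw [Real.log_pow, Real.log_mul (ne_of_gt hfac) (ne_of_gt (Real.exp_pos _)),
    Real.log_exp] at h3
  linarith

private lemma log_choose_le (l k : ℕ) (hk : 1 ≤ k) (hkl : k ≤ l) :
    Real.log (Nat.choose l k) ≤ k * (1 + Real.log l - Real.log k) := by
  have hkpos : (0:ℝ) < k := by exact_mod_cast hk
  have hlpos : (0:ℝ) < l := by exact_mod_cast lt_of_lt_of_le hk hkl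
  have hch : (0:ℝ) < (Nat.choose l k : ℝ) := by
    exact_mod_cast Nat.choose_pos hkl
  have h := Nat.choose_le_pow_div (α := ℝ) k l
  have hfac : (0:ℝ) < (Nat.factorial k : ℝ) := by exact_mod_cast Nat.factorial_pos k
  have h3 := Real.log_le_log hch h
  rw [Real.log_div (by positivity) (ne_of_gt hfac), Real.log_pow] at h3
  have h4 := log_fact_ge k hk
  nlinarith [h3, h4]

set_option maxHeartbeats 1000000 in
/-- There exists `μ₂ > 0` such that for every real `μ` with `0 < μ < μ₂`
and all integers `l ≥ t ≥ 1` with `t ≤ μ·l/(−4 log μ)`, one has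
`log C(l, t−1) ≤ (13/32)·μ·l`. -/
theorem log_choose_bad_cylinders :
    ∃ μ₂ : ℝ, 0 < μ₂ ∧ ∀ μ : ℝ, 0 < μ → μ < μ₂ → ∀ l t : ℕ, 1 ≤ t → t ≤ l →
      (t : ℝ) ≤ μ * l / (-4 * Real.log μ) →
      Real.log (Nat.choose l (t - 1)) ≤ 13 / 32 * μ * l := by
  refine ⟨Real.exp (-14), Real.exp_pos _, ?_⟩
  intro μ hμ hμ2 l t ht htl hT
  have hlμ : Real.log μ < -14 := by
    have := Real.log_lt_log hμ hμ2
    rwa [Real.log_exp] at this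
  set L : ℝ := -Real.log μ with hL
  have hL14 : 14 < L := by simp only [hL]; linarith
  have hLpos : 0 < L := by linarith
  have hlpos : (0:ℝ) < l := by
    exact_mod_cast lt_of_lt_of_le (Nat.lt_of_lt_of_le Nat.zero_lt_one ht) htl
  have hKdef : μ * l / (-4 * Real.log μ) = μ * l / (4 * L) := by
    rw [hL]; ring_nf
  set K : ℝ := μ * l / (4 * L) with hKd
  have hTK : (t : ℝ) ≤ K := by rw [← hKdef]; exact hT
  have hKpos : 0 < K := lt_of_lt_of_le (by exact_mod_cast ht) hTK
  have hμl : μ * l = 4 * L * K := by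
    rw [hKd]; field_simp
  rcases eq_or_lt_of_le ht with h1 | h2
  · -- t = 1
    have : t - 1 = 0 := by omega
    rw [this, Nat.choose_zero_right, Nat.cast_one, Real.log_one]
    nlinarith
  · -- t ≥ 2, set k = t - 1 ≥ 1
    set k : ℕ := t - 1 with hk
    have hk1 : 1 ≤ k := by omega
    have hkl : k ≤ l := by omega
    have hkcast : (k : ℝ) = (t : ℝ) - 1 := by
      rw [hk]; push_cast [Nat.cast_sub ht]; ring
    have hkK : (k : ℝ) ≤ K := by rw [hkcast]; linarith
    have hkpos : (0:ℝ) < k := by exact_mod_cast hk1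
    have hbound := log_choose_le l k hk1 hkl
    -- κ = μ / (4L), K = κ * l
    have hκpos : 0 < μ / (4 * L) := by positivity
    have hK : K = (μ / (4 * L)) * l := by rw [hKd]; ring
    have hlogl : Real.log l = Real.log K - Real.log (μ / (4 * L)) := by
      rw [hK, Real.log_mul (ne_of_gt hκpos) (ne_of_gt hlpos)]; ring
    -- log K - log k ≤ K/k - 1
    have hlog1 : Real.log (K / k) ≤ K / k - 1 :=
      Real.log_le_sub_one_of_pos (by positivity)
    have hlogKk : Real.log K - Real.log k ≤ K / k - 1 := by
      rwa [Real.log_div (ne_of_gt hKpos) (ne_of_gt hkpos)] at hlog1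
    have hterm2 : (k:ℝ) * (Real.log K - Real.log k) ≤ K := by
      have : (k:ℝ) * (Real.log K - Real.log k) ≤ (k:ℝ) * (K / k - 1) := by
        apply mul_le_mul_of_nonneg_left hlogKk (le_of_lt hkpos)
      have heq : (k:ℝ) * (K / k - 1) = K - k := by field_simp
      linarith
    -- -log κ = L + log (4 L)
    have hlogκ : Real.log (μ / (4 * L)) = -L - Real.log (4 * L) := by
      rw [Real.log_div (ne_of_gt hμ) (by positivity), hL]; ring
    -- numeric bounds
    have hlog4L : Real.log (4 * L) ≤ Real.log 4 + 3 / 8 * L := by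
      have h4 : (0:ℝ) < 4 := by norm_num
      rw [Real.log_mul (by norm_num) (ne_of_gt hLpos)]
      have he : Real.log (L / Real.exp 1) ≤ L / Real.exp 1 - 1 :=
        Real.log_le_sub_one_of_pos (by positivity)
      rw [Real.log_div (ne_of_gt hLpos) (ne_of_gt (Real.exp_pos 1)), Real.log_exp] at he
      have hegt : (8:ℝ)/3 < Real.exp 1 := by
        have := Real.exp_one_gt_d9; linarith
      have : L / Real.exp 1 ≤ 3 / 8 * L := by
        rw [div_le_iff₀ (Real.exp_pos 1)]
        nlinarith
      linarith
    have hlog4 : Real.log 4 < 1.39 := by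
      have h2 : Real.log 2 < 0.6931471808 := Real.log_two_lt_d9
      have : (4:ℝ) = 2 ^ 2 := by norm_num
      rw [this, Real.log_pow]
      push_cast
      linarith
    -- combine: -log κ ≤ L + 1.39 + 3/8 L
    have hnegκ : -Real.log (μ / (4 * L)) ≤ 11/8 * L + 1.39 := by
      rw [hlogκ]; linarith
    -- 1 - log κ ≥ 0 (since κ < 1)
    have hκlt1 : μ / (4 * L) < 1 := by
      rw [div_lt_one (by positivity)]
      have hμ1 : μ < 1 := lt_trans hμ2 (by
        rw [show (1:ℝ) = Real.exp 0 by simp]; exact Real.exp_lt_exp.mpr (by norm_num))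
      nlinarith
    have hlogκneg : Real.log (μ / (4 * L)) < 0 := Real.log_neg hκpos hκlt1
    have hterm1 : (k:ℝ) * (1 - Real.log (μ / (4 * L))) ≤ K * (1 - Real.log (μ / (4 * L))) :=
      mul_le_mul_of_nonneg_right hkK (by linarith)
    -- assemble
    have hmain : Real.log (Nat.choose l k) ≤ K * (2 - Real.log (μ / (4 * L))) := by
      have hsplit : (k:ℝ) * (1 + Real.log l - Real.log k)
          = (k:ℝ) * (1 - Real.log (μ / (4 * L))) + (k:ℝ) * (Real.log K - Real.log k) := by
        rw [hlogl]; ring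
      calc Real.log (Nat.choose l k) ≤ (k:ℝ) * (1 + Real.log l - Real.log k) := hbound
        _ = (k:ℝ) * (1 - Real.log (μ / (4 * L))) + (k:ℝ) * (Real.log K - Real.log k) := hsplit
        _ ≤ K * (1 - Real.log (μ / (4 * L))) + K := by linarith
        _ = K * (2 - Real.log (μ / (4 * L))) := by ring
    have hfinal : K * (2 - Real.log (μ / (4 * L))) ≤ 13 / 32 * μ * l := by
      have h1 : 2 - Real.log (μ / (4 * L)) ≤ 13/8 * L := by
        have : 2 + 11/8 * L + 1.39 ≤ 13/8 * L := by norm_num; linarith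
        linarith
      have : K * (2 - Real.log (μ / (4 * L))) ≤ K * (13/8 * L) :=
        mul_le_mul_of_nonneg_left h1 (le_of_lt hKpos)
      rw [show 13 / 32 * μ * l = 13/32 * (μ * l) by ring, hμl]
      linarith
    exact le_trans hmain hfinal
end

section
/- Let σ > 3 and 0 < μ < 1 be real numbers and let n ≥ l ≥ 1 and t ≥ 1 be integers. If −(3/32)·l·μ − (13/32)·t·log μ + (n−l)·log σ ≤ (1/256)·μ, then t/l ≤ μ/(−4·log μ). -/
/-- Let `σ > 3` and `0 < μ < 1` be real numbers and let `n ≥ l ≥ 1` and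
`t ≥ 1` be integers. If `−(3/32)·l·μ − (13/32)·t·log μ + (n−l)·log σ ≤ (1/256)·μ`,
then `t/l ≤ μ/(−4·log μ)`. -/
theorem visits_ratio (σ μ : ℝ) (hσ : 3 < σ) (hμ0 : 0 < μ) (hμ1 : μ < 1)
    (n l t : ℕ) (hl : 1 ≤ l) (hln : l ≤ n) (ht : 1 ≤ t)
    (h : -(3 / 32) * l * μ - 13 / 32 * t * Real.log μ + ((n : ℝ) - l) * Real.log σ ≤
      1 / 256 * μ) :
    (t : ℝ) / l ≤ μ / (-4 * Real.log μ) := by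
  have hL : Real.log μ < 0 := Real.log_neg hμ0 hμ1
  have hσ' : 0 < Real.log σ := Real.log_pos (by linarith)
  have hnl : (0:ℝ) ≤ (n:ℝ) - l := by
    have : (l:ℝ) ≤ n := Nat.cast_le.mpr hln
    linarith
  have hl' : (1:ℝ) ≤ l := Nat.one_le_cast.mpr hl
  have ht' : (1:ℝ) ≤ t := Nat.one_le_cast.mpr ht
  rw [div_le_div_iff₀ (by linarith) (by linarith)]
  nlinarith [mul_nonneg hnl hσ'.le, mul_le_mul_of_nonneg_right hl' hμ0.le]
end
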